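/- Let U, V be subspaces of ℝ^n and T = (Id + R_V R_U)/2. Then the fixed point set of T equals (U ∩ V) ⊕ (U⊥ ∩ V⊥); that is, T(x) = x if and only if x ∈ (U ∩ V) + (U⊥ ∩ V⊥). -/

import Mathlib

/-!
Write `u = P_U x`. Since `R_U x = 2u - x`, one has `T x - x = P_V (R_U x) - u`, so `x` is fixed
exactly when `u` is the orthogonal projection of `R_U x` onto `V`, i.e. when `u ∈ V` and
`R_U x - u = -(x - u) ∈ Vᗮ`. As `u ∈ U` and `x - u ∈ Uᗮ` always hold, this says that
`x = u + (x - u)` splits along `U ⊓ V` and `Uᗮ ⊓ Vᗮ`; conversely such a splitting of `x` is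
necessarily its splitting along `U ⊕ Uᗮ`.
-/

namespace Submodule

variable {𝕜 E : Type*} [RCLike 𝕜] [NormedAddCommGroup E] [InnerProductSpace 𝕜 E]

theorem starProjection_eq_iff {K : Submodule 𝕜 E} [K.HasOrthogonalProjection] {u v : E} :
    K.starProjection u = v ↔ v ∈ K ∧ u - v ∈ Kᗮ := by
  constructor
  · rintro rfl
    exact ⟨K.starProjection_apply_mem u, K.sub_starProjection_mem_orthogonal u⟩
  · rintro ⟨hv, huv⟩
    exact eq_starProjection_of_mem_orthogonal hv huv

theorem mem_inf_sup_orthogonal_inf_iff (U V : Submodule 𝕜 E) [U.HasOrthogonalProjection]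
    (x : E) :
    x ∈ (U ⊓ V) ⊔ (Uᗮ ⊓ Vᗮ) ↔ U.starProjection x ∈ V ∧ x - U.starProjection x ∈ Vᗮ := by
  constructor
  · intro hx
    obtain ⟨a, ⟨haU, haV⟩, b, ⟨hbU, hbV⟩, rfl⟩ := mem_sup.1 hx
    have hproj : U.starProjection (a + b) = a :=
      eq_starProjection_of_mem_orthogonal' haU hbU rfl
    rw [hproj, add_sub_cancel_left]
    exact ⟨haV, hbV⟩
  · rintro ⟨huV, hxuV⟩
    exact mem_sup.2 ⟨_, ⟨U.starProjection_apply_mem x, huV⟩, _,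
      ⟨U.sub_starProjection_mem_orthogonal x, hxuV⟩, add_sub_cancel _ _⟩

variable (U V : Submodule 𝕜 E) [U.HasOrthogonalProjection] [V.HasOrthogonalProjection]

noncomputable def douglasRachford (x : E) : E :=
  (2 : 𝕜)⁻¹ • (x + V.reflection (U.reflection x))

theorem douglasRachford_eq_self_iff_starProjection_reflection (x : E) :
    douglasRachford U V x = x ↔ V.starProjection (U.reflection x) = U.starProjection x := by
  have hsum : x + U.reflection x = 2 • U.starProjection x := add_sub_cancel x _
  rw [douglasRachford, inv_smul_eq_iff₀ two_ne_zero, two_smul, add_right_inj,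
    reflection_apply, sub_eq_iff_eq_add, hsum, ← ofNat_smul_eq_nsmul 𝕜, ← ofNat_smul_eq_nsmul 𝕜,
    smul_right_inj two_ne_zero]

theorem douglasRachford_eq_self_iff (x : E) :
    douglasRachford U V x = x ↔ x ∈ (U ⊓ V) ⊔ (Uᗮ ⊓ Vᗮ) := by
  have hdiff : U.reflection x - U.starProjection x = -(x - U.starProjection x) := by
    rw [reflection_apply, two_smul]; abel
  rw [douglasRachford_eq_self_iff_starProjection_reflection, starProjection_eq_iff, hdiff,
    neg_mem_iff, mem_inf_sup_orthogonal_inf_iff]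

end Submodule

/-- The fixed point set of the Douglas–Rachford operator `T = (Id + R_V R_U)/2` is
`(U ⊓ V) ⊔ (Uᗮ ⊓ Vᗮ)`. -/
theorem DR_fixedPoints (n : ℕ) (U V : Submodule ℝ (EuclideanSpace ℝ (Fin n)))
    (T : EuclideanSpace ℝ (Fin n) → EuclideanSpace ℝ (Fin n))
    (hT : ∀ x, T x = (2 : ℝ)⁻¹ • (x +
      (2 • (Submodule.orthogonalProjection V
          (2 • (Submodule.orthogonalProjection U x : EuclideanSpace ℝ (Fin n)) - x) :
          EuclideanSpace ℝ (Fin n)) -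
        (2 • (Submodule.orthogonalProjection U x : EuclideanSpace ℝ (Fin n)) - x))))
    (x : EuclideanSpace ℝ (Fin n)) :
    T x = x ↔ x ∈ (U ⊓ V) ⊔ (Uᗮ ⊓ Vᗮ) := by
  have hT_eq : T x = U.douglasRachford V x := hT x
  rw [hT_eq, Submodule.douglasRachford_eq_self_iff]
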